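/- Let G be a finite group, H ≤ G a subgroup, and ν : H → ℂ× a 1-dimensional character such that for every g ∈ G \ H there exists a ∈ H with gag⁻¹ ∈ H and ν(gag⁻¹) ≠ ν(a). Then Ind_H^G(ν) is irreducible. -/

import Mathlib

/-!
Let `e` be `ν` extended by zero from `H` to `G`. A vector of `Ind_H^G ν` on which right
translation by `H` also acts through `ν` vanishes off `H`: at `x ∉ H`, the element `a` given by
Mackey's condition makes the left and right equivariance rules give different scalars for
`f (x a)`. Such a vector is therefore a multiple of `e`. Averaging the right `H`-translates
against `ν⁻¹` sends a vector `f` of `Ind_H^G ν` to `|H| f(1) e`, so every nonzero invariant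
subspace contains `e`; and the right translates of `e` span `Ind_H^G ν`, because
`|H| f = ∑ₓ f(x) e(· x⁻¹)`.
-/

/-- The induced representation Ind_H^G(ν) realized concretely: the space of
functions f : G → ℂ with f(a·x) = ν(a)·f(x) for all a ∈ H, on which G acts by
right translation. -/
noncomputable def indSubspace (G : Type) [Group G] (H : Subgroup G) (ν : ↥H →* ℂˣ) :
    Submodule ℂ (G → ℂ) :=
  ⨅ (a : ↥H) (x : G),
    LinearMap.ker
      ((LinearMap.proj (R := ℂ) (φ := fun _ : G => ℂ) ((a : G) * x))
        - ((ν a : ℂˣ) : ℂ) • LinearMap.proj (R := ℂ) (φ := fun _ : G => ℂ) x)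

namespace IndSubspace

open scoped Classical

variable {G : Type} [Group G] {H : Subgroup G} {ν : H →* ℂˣ}

theorem mem_indSubspace_iff {f : G → ℂ} :
    f ∈ indSubspace G H ν ↔ ∀ (a : H) (x : G), f (a * x) = ν a * f x := by
  simp [indSubspace, Submodule.mem_iInf, sub_eq_zero]

theorem mul_right_mem_indSubspace {f : G → ℂ} (hf : f ∈ indSubspace G H ν) (g : G) :
    (fun x => f (x * g)) ∈ indSubspace G H ν := by
  rw [mem_indSubspace_iff] at hf ⊢
  intro a x
  simp only [mul_assoc, hf]

noncomputable def indGenerator (H : Subgroup G) (ν : H →* ℂˣ) (x : G) : ℂ :=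
  if hx : x ∈ H then ν ⟨x, hx⟩ else 0

@[simp]
theorem indGenerator_coe (a : H) : indGenerator H ν a = ν a := by
  simp [indGenerator]

theorem indGenerator_of_notMem {x : G} (hx : x ∉ H) : indGenerator H ν x = 0 := by
  simp [indGenerator, hx]

theorem indGenerator_one : indGenerator H ν 1 = 1 := by
  simpa using indGenerator_coe (ν := ν) 1

theorem indGenerator_mem : indGenerator H ν ∈ indSubspace G H ν := by
  rw [mem_indSubspace_iff]
  intro a x
  by_cases hx : x ∈ H
  · lift x to H using hx
    rw [← Subgroup.coe_mul, indGenerator_coe, indGenerator_coe, map_mul, Units.val_mul]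
  · have hax : (a : G) * x ∉ H := fun h => hx (by simpa using mul_mem (inv_mem a.2) h)
    simp [indGenerator_of_notMem hx, indGenerator_of_notMem hax]

theorem sum_indGenerator_mul [Fintype G] (g : G → ℂ) :
    ∑ x, indGenerator H ν x * g x = ∑ a : H, ν a * g a := by
  rw [← Fintype.sum_subtype_add_sum_subtype (· ∈ H), add_eq_left.mpr]
  · simp only [indGenerator_coe]
  exact Finset.sum_eq_zero fun x _ => by rw [indGenerator_of_notMem x.2, zero_mul]

theorem sum_smul_indGenerator_mul_inv [Fintype G] {f : G → ℂ}
    (hf : f ∈ indSubspace G H ν) :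
    ∑ x, f x • (fun y => indGenerator H ν (y * x⁻¹)) = (Nat.card H : ℂ) • f := by
  funext y
  have hterm (a : H) : ν a * f ((a : G)⁻¹ * y) = f y := by
    rw [← Subgroup.coe_inv, mem_indSubspace_iff.mp hf, map_inv, Units.mul_inv_cancel_left]
  simp only [Finset.sum_apply, Pi.smul_apply, smul_eq_mul]
  calc ∑ x, f x * indGenerator H ν (y * x⁻¹)
      = ∑ z, indGenerator H ν z * f (z⁻¹ * y) :=
        Fintype.sum_equiv ((Equiv.inv G).trans (Equiv.mulLeft y)) _ _ fun x => by simp [mul_comm]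
    _ = ∑ a : H, f y := by
      rw [sum_indGenerator_mul]
      exact Finset.sum_congr rfl fun a _ => hterm a
    _ = Nat.card H * f y := by simp [Nat.card_eq_fintype_card]

theorem indSubspace_ne_bot : indSubspace G H ν ≠ ⊥ :=
  (Submodule.ne_bot_iff _).mpr
    ⟨_, indGenerator_mem, fun h => by simpa [indGenerator_one] using congrFun h 1⟩

theorem indSubspace_le_of_indGenerator_mem [Fintype G] {W : Submodule ℂ (G → ℂ)}
    (hW : ∀ f ∈ W, ∀ g : G, (fun x => f (x * g)) ∈ W) (he : indGenerator H ν ∈ W) :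
    indSubspace G H ν ≤ W := by
  intro f hf
  have hsum : ∑ x, f x • (fun y => indGenerator H ν (y * x⁻¹)) ∈ W :=
    W.sum_mem fun x _ => W.smul_mem _ (hW _ he x⁻¹)
  rw [sum_smul_indGenerator_mul_inv hf] at hsum
  exact (W.smul_mem_iff (Nat.cast_ne_zero.mpr Nat.card_pos.ne')).mp hsum

noncomputable def twistedAverage [Fintype G] (H : Subgroup G) (ν : H →* ℂˣ) (f : G → ℂ) :
    G → ℂ :=
  ∑ a : H, ((ν a⁻¹ : ℂˣ) : ℂ) • fun x => f (x * a)

section TwistedAverage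

variable [Fintype G]

theorem twistedAverage_apply (f : G → ℂ) (x : G) :
    twistedAverage H ν f x = ∑ a : H, ν a⁻¹ * f (x * a) := by
  simp [twistedAverage, Finset.sum_apply]

theorem twistedAverage_mul_right (f : G → ℂ) (a : H) (x : G) :
    twistedAverage H ν f (x * a) = ν a * twistedAverage H ν f x := by
  rw [twistedAverage_apply, twistedAverage_apply, Finset.mul_sum]
  refine Fintype.sum_equiv (Equiv.mulLeft a) _ _ fun b => ?_
  simp only [Equiv.coe_mulLeft, Subgroup.coe_mul, mul_inv_rev, map_mul, Units.val_mul, mul_assoc]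
  rw [map_inv ν a, mul_left_comm (ν a : ℂ), Units.mul_inv_cancel_left]

theorem twistedAverage_apply_one {f : G → ℂ} (hf : f ∈ indSubspace G H ν) :
    twistedAverage H ν f 1 = Nat.card H * f 1 := by
  have hterm (a : H) : ν a⁻¹ * f (1 * a) = f 1 := by
    rw [one_mul, ← mul_one (a : G), mem_indSubspace_iff.mp hf, map_inv, Units.inv_mul_cancel_left]
  rw [twistedAverage_apply, Finset.sum_congr rfl fun a _ => hterm a, Finset.sum_const,
    Finset.card_univ, nsmul_eq_mul, Nat.card_eq_fintype_card]

theorem twistedAverage_mem {W : Submodule ℂ (G → ℂ)}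
    (hW : ∀ f ∈ W, ∀ g : G, (fun x => f (x * g)) ∈ W) {f : G → ℂ} (hf : f ∈ W) :
    twistedAverage H ν f ∈ W :=
  W.sum_mem fun a _ => W.smul_mem _ (hW f hf a)

end TwistedAverage

/-- `ν` and its conjugate by `g` differ on `H ∩ g⁻¹Hg` whenever `g ∉ H`. -/
def MackeyCondition (H : Subgroup G) (ν : H →* ℂˣ) : Prop :=
  ∀ g : G, g ∉ H →
    ∃ (a : G) (ha : a ∈ H) (hc : g * a * g⁻¹ ∈ H),
      ν ⟨g * a * g⁻¹, hc⟩ ≠ ν ⟨a, ha⟩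

section Mackey

variable {f : G → ℂ} (hf : f ∈ indSubspace G H ν)
  (hright : ∀ (a : H) (x : G), f (x * a) = ν a * f x)
include hf hright

theorem apply_eq_zero_of_conj_ne {x a : G} (ha : a ∈ H) (hc : x * a * x⁻¹ ∈ H)
    (hne : ν ⟨x * a * x⁻¹, hc⟩ ≠ ν ⟨a, ha⟩) : f x = 0 := by
  have hleft : f (x * a) = ν ⟨x * a * x⁻¹, hc⟩ * f x := by
    simpa [mul_assoc] using mem_indSubspace_iff.mp hf ⟨x * a * x⁻¹, hc⟩ x
  have hdiff : ((ν ⟨x * a * x⁻¹, hc⟩ : ℂ) - ν ⟨a, ha⟩) * f x = 0 := by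
    rw [sub_mul, ← hleft, hright ⟨a, ha⟩ x, sub_self]
  exact (mul_eq_zero.mp hdiff).resolve_left (sub_ne_zero.mpr (Units.val_injective.ne hne))

theorem eq_smul_indGenerator (hmackey : MackeyCondition H ν) : f = f 1 • indGenerator H ν := by
  funext x
  by_cases hx : x ∈ H
  · lift x to H using hx
    simpa [mul_comm] using mem_indSubspace_iff.mp hf x 1
  · obtain ⟨a, ha, hc, hne⟩ := hmackey x hx
    simp [apply_eq_zero_of_conj_ne hf hright ha hc hne, indGenerator_of_notMem hx]

end Mackey

theorem indGenerator_mem_of_ne_bot [Fintype G] (hmackey : MackeyCondition H ν)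
    {W : Submodule ℂ (G → ℂ)} (hWV : W ≤ indSubspace G H ν)
    (hW : ∀ f ∈ W, ∀ g : G, (fun x => f (x * g)) ∈ W) (hne : W ≠ ⊥) :
    indGenerator H ν ∈ W := by
  obtain ⟨w, hwW, hw0⟩ := (Submodule.ne_bot_iff W).mp hne
  obtain ⟨g, hg⟩ : ∃ g, w g ≠ 0 := by
    by_contra! h
    exact hw0 (funext h)
  have huW : (fun x => w (x * g)) ∈ W := hW w hwW g
  have huV := hWV huW
  have hproj :
      twistedAverage H ν (fun x => w (x * g)) = (Nat.card H * w g) • indGenerator H ν := by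
    rw [eq_smul_indGenerator (twistedAverage_mem (fun _ => mul_right_mem_indSubspace) huV)
      (twistedAverage_mul_right _) hmackey, twistedAverage_apply_one huV, one_mul]
  have hc : (Nat.card H * w g : ℂ) ≠ 0 := mul_ne_zero (Nat.cast_ne_zero.mpr Nat.card_pos.ne') hg
  rw [← inv_smul_smul₀ hc (indGenerator H ν), ← hproj]
  exact W.smul_mem _ (twistedAverage_mem hW huW)

end IndSubspace

open IndSubspace in
/-- Mackey's criterion for a 1-dimensional character: if for every
g ∈ G \ H there is a ∈ H with gag⁻¹ ∈ H and ν(gag⁻¹) ≠ ν(a), then Ind_H^G(ν) is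
irreducible: it is nonzero and its only right-translation-invariant subspaces are
0 and the whole space. -/
theorem stmt_19 (G : Type) [Group G] [Fintype G]
    (H : Subgroup G) (ν : ↥H →* ℂˣ)
    (hmackey : ∀ g : G, g ∉ H →
      ∃ (a : G) (ha : a ∈ H) (hc : g * a * g⁻¹ ∈ H),
        ν ⟨g * a * g⁻¹, hc⟩ ≠ ν ⟨a, ha⟩) :
    indSubspace G H ν ≠ ⊥ ∧
    ∀ W : Submodule ℂ (G → ℂ), W ≤ indSubspace G H ν →
      (∀ f ∈ W, ∀ g : G, (fun x : G => f (x * g)) ∈ W) →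
      W = ⊥ ∨ W = indSubspace G H ν := by
  refine ⟨indSubspace_ne_bot, fun W hWV hW => or_iff_not_imp_left.mpr fun hne => ?_⟩
  exact le_antisymm hWV
    (indSubspace_le_of_indGenerator_mem hW (indGenerator_mem_of_ne_bot hmackey hWV hW hne))
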